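/- Let v ≥ 3 be odd and let C be a 5-cycle of type 1 on ZMod v containing 0, with consecutive difference sequence (d_1, …, d_5) (summing to 0) such that the 10 elements ±d_1, …, ±d_5 are pairwise distinct in ZMod v. For permutations σ, τ of {1,…,5}, define C_σ = (0, d_{σ(1)}, d_{σ(1)}+d_{σ(2)}, …, d_{σ(1)}+⋯+d_{σ(4)}) and C_τ analogously. Then C_σ lies in the ZMod v-translation orbit of C_τ if and only if the oriented difference sequence (d_{σ(1)}, …, d_{σ(5)}) is a cyclic rotation of (d_{τ(1)}, …, d_{τ(5)}). Consequently, the 5! cycles C_α, α ranging over the permutations of {1,…,5}, fall into exactly 4! translation-orbit classes of 5 cycles each. -/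

import Mathlib

namespace CCS

/-- A block: a set of edges of the complete graph on `ZMod v`. -/
abbrev Block (v : ℕ) := Finset (Sym2 (ZMod v))

/-- The edge set of the closed tuple `c = (c 0, c 1, …, c (k-1))`. -/
def edgesOf {v k : ℕ} (c : Fin k → ZMod v) : Block v :=
  Finset.image (fun i : Fin k => s(c i, c ⟨(i.1 + 1) % k, Nat.mod_lt _ i.pos⟩)) Finset.univ

/-- `E` is the edge set of a `k`-cycle on `ZMod v`. Since for `k ≥ 3` the edge set
determines the closed tuple up to rotation and reversal, a `k`-cycle is identified
with its edge set. -/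
def IsCycleBlock (v k : ℕ) (E : Block v) : Prop :=
  ∃ c : Fin k → ZMod v, Function.Injective c ∧ E = edgesOf c

/-- The translate `E + z` of a cycle. -/
def translateBlock {v : ℕ} (E : Block v) (z : ZMod v) : Block v :=
  E.image (Sym2.map (· + z))

/-- A `(K_v, C_k)`-design: a set of `k`-cycles whose edge sets partition the edges of `K_v`. -/
def IsDesign (v k : ℕ) (B : Set (Block v)) : Prop :=
  (∀ E ∈ B, IsCycleBlock v k E) ∧
  ∀ e : Sym2 (ZMod v), ¬ e.IsDiag → ∃! E, E ∈ B ∧ e ∈ E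

/-- A cyclic `(K_v, C_k)`-design. -/
def IsCyclicDesign (v k : ℕ) (B : Set (Block v)) : Prop :=
  IsDesign v k B ∧ ∀ E ∈ B, ∀ z : ZMod v, translateBlock E z ∈ B

/-- Two designs are isomorphic if a bijection of `ZMod v` maps one onto the other. -/
def Isomorphic {v : ℕ} (B B' : Set (Block v)) : Prop :=
  ∃ f : ZMod v ≃ ZMod v, B' = (fun E : Block v => E.image (Sym2.map f)) '' B

/-- `NC v k`: the number of cyclic `(K_v, C_k)`-designs up to isomorphism. -/
noncomputable def NC (v k : ℕ) : ℕ :=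
  Nat.card (Quot fun B B' : {B : Set (Block v) // IsCyclicDesign v k B} =>
    Isomorphic B.1 B'.1)

/-- The type of a cycle: the order of its stabilizer under translations. -/
noncomputable def cycleType {v : ℕ} (E : Block v) : ℕ :=
  Nat.card {z : ZMod v // translateBlock E z = E}

/-- The two differences `±(a-b)` arising from an edge `{a,b}`. -/
def edgeDiffs {v : ℕ} : Sym2 (ZMod v) → Multiset (ZMod v) :=
  Sym2.lift ⟨fun a b => {a - b, b - a}, fun a b => by
    show (a-b) ::ₘ {b-a} = (b-a) ::ₘ {a-b}; exact Multiset.cons_swap _ _ _⟩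

/-- The multiset of the `2k` differences arising from the `k` edges of a cycle.
For a cycle of type `d` this is `d` copies of the list `∂C` of partial differences. -/
def fullDiffs {v : ℕ} (E : Block v) : Multiset (ZMod v) :=
  E.val.bind edgeDiffs

/-- The multiset `∂C` of partial differences of a cycle: each difference is counted
with multiplicity equal to its multiplicity among the `2k` edge differences divided
by the type of the cycle. -/
noncomputable def partialDiffs {v : ℕ} (E : Block v) : Multiset (ZMod v) :=
  (fullDiffs E).toFinset.val.bind fun x =>
    Multiset.replicate ((fullDiffs E).count x / cycleType E) x

/-- A `(K_v, C_k)`-difference system: a set of `k`-cycles whose partial differences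
cover every nonzero element of `ZMod v` exactly once. -/
def IsDifferenceSystem (v k : ℕ) (F : Finset (Block v)) : Prop :=
  (∀ E ∈ F, IsCycleBlock v k E) ∧
  ∀ x : ZMod v, (F.val.bind partialDiffs).count x = if x = 0 then 0 else 1

end CCS

/-- The partial sums `0, d_1, d_1+d_2, d_1+d_2+d_3, d_1+d_2+d_3+d_4` of a difference
sequence `d : Fin 5 → ZMod v`: the vertex tuple of the associated 5-cycle. -/
def psum {v : ℕ} (d : Fin 5 → ZMod v) (j : Fin 5) : ZMod v :=
  ∑ i ∈ Finset.univ.filter (fun i : Fin 5 => (i : ℕ) < (j : ℕ)), d i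

/-- The translation orbit of a cycle under `ZMod v`. -/
def orbitOf {v : ℕ} (E : CCS.Block v) : Set (CCS.Block v) :=
  {E' | ∃ z : ZMod v, CCS.translateBlock E z = E'}

/-!
The ten differences `±d_i` are distinct and, since a nonempty proper subfamily of the `d_i`
or its complement has at most two members, no such subfamily sums to `0`. Hence the vertices of
every `C_τ` are distinct and each edge of `C_τ` carries the difference `d_j` for exactly one `j`,
in exactly one direction. A translate `C_τ + z = C_σ` must therefore send the edge of `C_τ`
labelled `d_{σ i}` to the edge of `C_σ` with the same label and orientation; following the cycle
around, `τ⁻¹σ` is a rotation `i ↦ i + r`. So the orbit class of `C_τ` among the `C_α` consists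
of the five cycles `C_{τ ∘ (· + r)}`, and there are `5! / 5 = 4!` classes.
-/

open Finset Function

theorem Fin.induction_add_one {n : ℕ} {P : Fin (n + 1) → Prop} (zero : P 0)
    (add_one : ∀ i, P i → P (i + 1)) (i : Fin (n + 1)) : P i :=
  Fin.induction zero (fun j hj => by simpa [Fin.coeSucc_eq_succ] using add_one _ hj) i

theorem Fin.eq_add_of_map_add_one {n : ℕ} {π : Fin (n + 1) → Fin (n + 1)}
    (h : ∀ i, π (i + 1) = π i + 1) (i : Fin (n + 1)) : π i = i + π 0 :=
  Fin.induction_add_one (P := fun i => π i = i + π 0) (by rw [zero_add])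
    (fun j hj => by rw [h, hj, add_right_comm]) i

theorem Sym2.eq_and_eq_of_mk_add_eq_mk_add {G : Type*} [AddCommGroup G] {a b x y : G}
    (h : s(a, a + x) = s(b, b + y)) (hxy : x ≠ -y) : a = b ∧ x = y := by
  rcases Sym2.eq_iff.mp h with ⟨rfl, h⟩ | ⟨rfl, h⟩
  · exact ⟨rfl, add_left_cancel h⟩
  · refine absurd ?_ hxy
    rw [add_assoc, add_eq_left] at h
    exact eq_neg_of_add_eq_zero_right h

def SignedInjective {ι G : Type*} [Neg G] (d : ι → G) : Prop :=
  Injective fun p : ι × Bool => cond p.2 (d p.1) (-d p.1)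

namespace SignedInjective

variable {ι κ G : Type*}

section Neg

variable [Neg G] {d : ι → G}

theorem injective (hd : SignedInjective d) : Injective d :=
  fun a b h => congrArg Prod.fst (@hd (a, true) (b, true) h)

theorem ne_neg (hd : SignedInjective d) (a b : ι) : d a ≠ -d b :=
  fun h => Bool.noConfusion (congrArg Prod.snd (@hd (a, true) (b, false) h))

theorem comp (hd : SignedInjective d) {f : κ → ι} (hf : Injective f) :
    SignedInjective (d ∘ f) :=
  Injective.comp hd (hf.prodMap injective_id)

end Neg

variable [AddCommGroup G] {d : ι → G}

theorem ne_zero (hd : SignedInjective d) (a : ι) : d a ≠ 0 :=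
  fun h => hd.ne_neg a a (by rw [h, neg_zero])

theorem sum_ne_zero_of_card_le_two (hd : SignedInjective d) {s : Finset ι}
    (hne : s.Nonempty) (hcard : #s ≤ 2) : ∑ i ∈ s, d i ≠ 0 := by
  classical
  obtain h | h : #s = 1 ∨ #s = 2 := by have := hne.card_pos; omega
  · obtain ⟨i, rfl⟩ := card_eq_one.mp h
    simpa using hd.ne_zero i
  · obtain ⟨i, j, hij, rfl⟩ := card_eq_two.mp h
    rw [sum_pair hij]
    exact fun h => hd.ne_neg i j (eq_neg_of_add_eq_zero_left h)

theorem sum_ne_zero_of_ne_univ [Fintype ι] (hd : SignedInjective d)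
    (hcard : Fintype.card ι ≤ 5) (hsum : ∑ i, d i = 0) {s : Finset ι}
    (hne : s.Nonempty) (hs : s ≠ univ) : ∑ i ∈ s, d i ≠ 0 := by
  classical
  by_cases h2 : #s ≤ 2
  · exact hd.sum_ne_zero_of_card_le_two hne h2
  have hcompl : ∑ i ∈ sᶜ, d i ≠ 0 := by
    refine hd.sum_ne_zero_of_card_le_two ?_ (by rw [card_compl]; omega)
    rwa [nonempty_iff_ne_empty, Ne, compl_eq_empty_iff]
  rw [← sum_add_sum_compl s d, add_eq_zero_iff_eq_neg] at hsum
  rw [hsum, neg_ne_zero]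
  exact hcompl

end SignedInjective

section PartialSums

variable {v : ℕ} {e : Fin 5 → ZMod v}

theorem psum_zero : psum e 0 = 0 := by
  simp [psum]

theorem psum_add_one (hs : ∑ i, e i = 0) (j : Fin 5) : psum e (j + 1) = psum e j + e j := by
  rw [Fin.sum_univ_five] at hs
  fin_cases j <;> simp [psum, sum_filter, Fin.sum_univ_five]
  linear_combination -hs

theorem psum_injective (he : SignedInjective e) (hs : ∑ i, e i = 0) : Injective (psum e) := by
  classical
  suffices h : ∀ a b : Fin 5, a < b → psum e a ≠ psum e b by
    intro a b hab
    by_contra hne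
    rcases lt_or_gt_of_ne hne with hlt | hlt
    exacts [h a b hlt hab, h b a hlt hab.symm]
  intro a b hab
  have hsub : univ.filter (fun i : Fin 5 => (i : ℕ) < a) ⊆ univ.filter (fun i => (i : ℕ) < b) :=
    fun i => by simpa using fun hi : (i : ℕ) < a => hi.trans hab
  rw [psum, psum, ← sum_sdiff hsub, ne_eq, right_eq_add]
  refine he.sum_ne_zero_of_ne_univ (by simp) hs ⟨a, by simp [hab]⟩ fun h => ?_
  simpa using eq_univ_iff_forall.mp h b

theorem psum_comp_addRight (hs : ∑ i, e i = 0) (r i : Fin 5) :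
    psum (e ∘ Equiv.addRight r) i = psum e (i + r) - psum e r := by
  have hs' : ∑ i, (e ∘ Equiv.addRight r) i = 0 := (Equiv.sum_comp _ e).trans hs
  induction i using Fin.induction_add_one with
  | zero => rw [psum_zero, zero_add, sub_self]
  | add_one i ih =>
    rw [psum_add_one hs', ih, add_right_comm, psum_add_one hs]
    simp only [comp_apply, Equiv.coe_addRight]
    abel

end PartialSums

namespace CCS

variable {v k : ℕ}

theorem edgesOf_eq_image [NeZero k] (c : Fin k → ZMod v) :
    edgesOf c = univ.image fun i => s(c i, c (i + 1)) := by
  unfold edgesOf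
  congr! with i
  rw [Fin.val_add, Fin.val_one', Nat.add_mod_mod]

theorem edgesOf_comp_addRight [NeZero k] (c : Fin k → ZMod v) (r : Fin k) :
    edgesOf (c ∘ Equiv.addRight r) = edgesOf c := by
  rw [edgesOf_eq_image, edgesOf_eq_image]
  conv_rhs => rw [← image_univ_of_surjective (Equiv.addRight r).surjective, image_image]
  congr! 2 with i
  simp [add_right_comm]

theorem translateBlock_edgesOf (c : Fin k → ZMod v) (z : ZMod v) :
    translateBlock (edgesOf c) z = edgesOf (c · + z) := by
  rw [translateBlock, edgesOf, edgesOf, image_image]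
  rfl

theorem translateBlock_zero (E : Block v) : translateBlock E 0 = E := by
  simp [translateBlock]

theorem translateBlock_translateBlock (E : Block v) (z w : ZMod v) :
    translateBlock (translateBlock E z) w = translateBlock E (z + w) := by
  simp only [translateBlock, image_image]
  congr 1
  funext e
  simp [Sym2.map_map, add_assoc]

end CCS

theorem orbitOf_eq_orbitOf_iff {v : ℕ} {E F : CCS.Block v} :
    orbitOf E = orbitOf F ↔ E ∈ orbitOf F := by
  constructor
  · intro h
    exact h ▸ ⟨0, CCS.translateBlock_zero E⟩
  · rintro ⟨z, rfl⟩
    ext G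
    constructor
    · rintro ⟨w, rfl⟩
      exact ⟨z + w, (CCS.translateBlock_translateBlock F z w).symm⟩
    · rintro ⟨w, rfl⟩
      refine ⟨w - z, ?_⟩
      rw [CCS.translateBlock_translateBlock, add_sub_cancel]

section Rigidity

variable {v : ℕ} {e : Fin 5 → ZMod v}

theorem psum_comp_eq_of_translateBlock_eq (he : SignedInjective e) (hs : ∑ i, e i = 0)
    {π : Equiv.Perm (Fin 5)} {z : ZMod v}
    (h : CCS.translateBlock (CCS.edgesOf (psum e)) z = CCS.edgesOf (psum (e ∘ π))) (i : Fin 5) :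
    psum (e ∘ π) i = psum e (π i) + z := by
  have hsπ : ∑ i, (e ∘ π) i = 0 := (Equiv.sum_comp π e).trans hs
  have hi : s(psum (e ∘ π) i, psum (e ∘ π) (i + 1)) ∈ CCS.edgesOf (psum (e ∘ π)) := by
    rw [CCS.edgesOf_eq_image]
    exact mem_image_of_mem _ (mem_univ i)
  rw [← h, CCS.translateBlock_edgesOf, CCS.edgesOf_eq_image] at hi
  obtain ⟨j, -, hj⟩ := mem_image.mp hi
  rw [psum_add_one hs, psum_add_one hsπ, add_right_comm] at hj
  obtain ⟨hj, hje⟩ := Sym2.eq_and_eq_of_mk_add_eq_mk_add hj (he.ne_neg _ _)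
  rw [← he.injective hje, hj]

theorem exists_eq_addRight_of_translateBlock_eq (he : SignedInjective e) (hs : ∑ i, e i = 0)
    {π : Equiv.Perm (Fin 5)} {z : ZMod v}
    (h : CCS.translateBlock (CCS.edgesOf (psum e)) z = CCS.edgesOf (psum (e ∘ π))) :
    ∃ r, π = Equiv.addRight r ∧ z = -psum e r := by
  have hp := psum_comp_eq_of_translateBlock_eq he hs h
  have hsπ : ∑ i, (e ∘ π) i = 0 := (Equiv.sum_comp π e).trans hs
  have hstep (i : Fin 5) : π (i + 1) = π i + 1 := by
    refine psum_injective he hs (add_right_cancel (b := z) ?_)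
    rw [← hp, psum_add_one hsπ, hp, psum_add_one hs, add_right_comm, comp_apply]
  refine ⟨π 0, Equiv.ext (Fin.eq_add_of_map_add_one hstep), ?_⟩
  have h0 := hp 0
  rw [psum_zero] at h0
  exact eq_neg_of_add_eq_zero_right h0.symm

theorem translateBlock_edgesOf_psum_eq_iff (he : SignedInjective e) (hs : ∑ i, e i = 0)
    {π : Equiv.Perm (Fin 5)} {z : ZMod v} :
    CCS.translateBlock (CCS.edgesOf (psum e)) z = CCS.edgesOf (psum (e ∘ π)) ↔
      ∃ r, π = Equiv.addRight r ∧ z = -psum e r := by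
  refine ⟨exists_eq_addRight_of_translateBlock_eq he hs, ?_⟩
  rintro ⟨r, rfl, rfl⟩
  have hrot : psum (e ∘ Equiv.addRight r) = (psum e · + -psum e r) ∘ Equiv.addRight r :=
    funext fun i => (psum_comp_addRight hs r i).trans (sub_eq_add_neg _ _)
  rw [hrot, CCS.edgesOf_comp_addRight, CCS.translateBlock_edgesOf]

end Rigidity

theorem Nat.card_range_mul_of_card_fiber {α β : Type*} [Finite α] (f : α → β) {m : ℕ}
    (h : ∀ a, Nat.card {x // f x = f a} = m) : Nat.card (Set.range f) * m = Nat.card α := by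
  classical
  have := Fintype.ofFinite α
  calc Nat.card (Set.range f) * m = ∑ b ∈ univ.image f, #{a | f a = b} := by
        rw [Nat.card_eq_card_toFinset, Set.toFinset_range]
        refine (sum_const_nat fun b hb => ?_).symm
        obtain ⟨a, -, rfl⟩ := mem_image.mp hb
        rw [← Fintype.card_subtype, ← Nat.card_eq_fintype_card, h]
    _ = Nat.card α := by rw [← card_eq_sum_card_image, Finset.card_univ, Nat.card_eq_fintype_card]

section PermutedCycles

variable {v : ℕ} {d : Fin 5 → ZMod v}

/-- The cycle `C_α` of the paper. -/
def permCycle (d : Fin 5 → ZMod v) (α : Equiv.Perm (Fin 5)) : CCS.Block v :=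
  CCS.edgesOf (psum (d ∘ α))

theorem translateBlock_permCycle_eq_iff (hd : SignedInjective d) (hs : ∑ i, d i = 0)
    {σ τ : Equiv.Perm (Fin 5)} {z : ZMod v} :
    CCS.translateBlock (permCycle d τ) z = permCycle d σ ↔
      ∃ r, σ = τ * Equiv.addRight r ∧ z = -psum (d ∘ τ) r := by
  have hσ : d ∘ σ = (d ∘ τ) ∘ (τ⁻¹ * σ) := by ext; simp
  rw [permCycle, permCycle, hσ, translateBlock_edgesOf_psum_eq_iff (hd.comp τ.injective)
    ((Equiv.sum_comp τ d).trans hs)]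
  simp_rw [inv_mul_eq_iff_eq_mul]

theorem permCycle_mem_orbitOf_iff (hd : SignedInjective d) (hs : ∑ i, d i = 0)
    {σ τ : Equiv.Perm (Fin 5)} :
    permCycle d σ ∈ orbitOf (permCycle d τ) ↔ ∃ r, σ = τ * Equiv.addRight r := by
  constructor
  · rintro ⟨z, hz⟩
    obtain ⟨r, hr, -⟩ := (translateBlock_permCycle_eq_iff hd hs).mp hz
    exact ⟨r, hr⟩
  · rintro ⟨r, hr⟩
    exact ⟨_, (translateBlock_permCycle_eq_iff hd hs).mpr ⟨r, hr, rfl⟩⟩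

theorem permCycle_injective (hd : SignedInjective d) (hs : ∑ i, d i = 0) :
    Injective (permCycle d) := by
  intro σ τ h
  obtain ⟨r, rfl, h0⟩ :=
    (translateBlock_permCycle_eq_iff hd hs).mp ((CCS.translateBlock_zero _).trans h.symm)
  have hr : r = 0 := psum_injective (hd.comp τ.injective) ((Equiv.sum_comp τ d).trans hs)
    (by rw [psum_zero, ← neg_eq_zero, ← h0])
  simp [hr]

theorem setOf_orbitOf_permCycle_eq (hd : SignedInjective d) (hs : ∑ i, d i = 0)
    (τ : Equiv.Perm (Fin 5)) :
    {σ | orbitOf (permCycle d σ) = orbitOf (permCycle d τ)} =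
      Set.range fun r => τ * Equiv.addRight r := by
  ext σ
  rw [Set.mem_ofPred_eq, orbitOf_eq_orbitOf_iff, permCycle_mem_orbitOf_iff hd hs]
  simp [eq_comm]

theorem card_orbitOf_permCycle_fiber (hd : SignedInjective d) (hs : ∑ i, d i = 0)
    (τ : Equiv.Perm (Fin 5)) :
    Nat.card {σ // orbitOf (permCycle d σ) = orbitOf (permCycle d τ)} = 5 := by
  rw [← Set.coe_ofPred, setOf_orbitOf_permCycle_eq hd hs, Nat.card_range_of_injective,
    Nat.card_fin]
  intro r r' h
  simpa using DFunLike.congr_fun h 0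

theorem card_range_orbitOf_permCycle (hd : SignedInjective d) (hs : ∑ i, d i = 0) :
    Nat.card (Set.range fun α => orbitOf (permCycle d α)) = Nat.factorial 4 := by
  have h := Nat.card_range_mul_of_card_fiber _ (card_orbitOf_permCycle_fiber hd hs)
  rw [Nat.card_perm, Nat.card_fin, Nat.factorial_succ 4, mul_comm 5] at h
  exact Nat.eq_of_mul_eq_mul_right (by norm_num) h

theorem card_permCycle_orbitOf_eq (hd : SignedInjective d) (hs : ∑ i, d i = 0)
    (α : Equiv.Perm (Fin 5)) :
    Nat.card {E // E ∈ Set.range (permCycle d) ∧ orbitOf E = orbitOf (permCycle d α)} = 5 := by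
  have himage : {E | E ∈ Set.range (permCycle d) ∧ orbitOf E = orbitOf (permCycle d α)} =
      permCycle d '' {σ | orbitOf (permCycle d σ) = orbitOf (permCycle d α)} := by
    ext E
    simp only [Set.mem_ofPred_eq, Set.mem_range, Set.mem_image]
    constructor
    · rintro ⟨⟨σ, rfl⟩, h⟩
      exact ⟨σ, h, rfl⟩
    · rintro ⟨σ, h, rfl⟩
      exact ⟨⟨σ, rfl⟩, h⟩
  rw [← Set.coe_ofPred, himage, Nat.card_image_of_injective (permCycle_injective hd hs),
    Set.coe_ofPred, card_orbitOf_permCycle_fiber hd hs]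

end PermutedCycles

theorem stmt8_general (v : ℕ) (d : Fin 5 → ZMod v)
    (hsum : ∑ i, d i = 0)
    (hdiff : Function.Injective fun p : Fin 5 × Bool => cond p.2 (d p.1) (-d p.1)) :
    (∀ σ τ : Equiv.Perm (Fin 5),
      CCS.edgesOf (psum (d ∘ σ)) ∈ orbitOf (CCS.edgesOf (psum (d ∘ τ))) ↔
        ∃ r : Fin 5, ∀ i : Fin 5, d (σ i) = d (τ (i + r))) ∧
    Nat.card
      (Set.range fun α : Equiv.Perm (Fin 5) => orbitOf (CCS.edgesOf (psum (d ∘ α)))) =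
      Nat.factorial 4 ∧
    (∀ α : Equiv.Perm (Fin 5),
      Nat.card {E : CCS.Block v //
        E ∈ Set.range (fun β : Equiv.Perm (Fin 5) => CCS.edgesOf (psum (d ∘ β))) ∧
        orbitOf E = orbitOf (CCS.edgesOf (psum (d ∘ α)))} = 5) := by
  refine ⟨fun σ τ => ?_, card_range_orbitOf_permCycle hdiff hsum,
    card_permCycle_orbitOf_eq hdiff hsum⟩
  refine (permCycle_mem_orbitOf_iff hdiff hsum).trans (exists_congr fun r => ?_)
  exact ⟨fun h i => by rw [h]; rfl,
    fun h => Equiv.ext fun i => SignedInjective.injective hdiff (h i)⟩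

/-- Let `C` be a 5-cycle of type 1 containing `0` with consecutive
difference sequence `(d_1, …, d_5)` (summing to `0`) whose ten elements `±d_i` are
pairwise distinct. For permutations `σ, τ` of the indices, the cycle `C_σ` lies in the
translation orbit of `C_τ` iff `(d_{σ(1)}, …, d_{σ(5)})` is a cyclic rotation of
`(d_{τ(1)}, …, d_{τ(5)})`. Consequently the `5!` cycles `C_α` fall into exactly `4!`
translation-orbit classes of `5` cycles each. -/
theorem stmt8 (v : ℕ) (hv : 3 ≤ v) (hvodd : Odd v) (d : Fin 5 → ZMod v)
    (hsum : ∑ i, d i = 0)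
    (hCinj : Function.Injective (psum d))
    (htype : CCS.cycleType (CCS.edgesOf (psum d)) = 1)
    (hdiff : Function.Injective fun p : Fin 5 × Bool => cond p.2 (d p.1) (-d p.1)) :
    (∀ σ τ : Equiv.Perm (Fin 5),
      CCS.edgesOf (psum (d ∘ σ)) ∈ orbitOf (CCS.edgesOf (psum (d ∘ τ))) ↔
        ∃ r : Fin 5, ∀ i : Fin 5, d (σ i) = d (τ (i + r))) ∧
    Nat.card
      (Set.range fun α : Equiv.Perm (Fin 5) => orbitOf (CCS.edgesOf (psum (d ∘ α)))) =
      Nat.factorial 4 ∧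
    (∀ α : Equiv.Perm (Fin 5),
      Nat.card {E : CCS.Block v //
        E ∈ Set.range (fun β : Equiv.Perm (Fin 5) => CCS.edgesOf (psum (d ∘ β))) ∧
        orbitOf E = orbitOf (CCS.edgesOf (psum (d ∘ α)))} = 5) :=
  stmt8_general v d hsum hdiff
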